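/- arXiv:2504.07044 — 6 statements merged into one kernel-verified Lean document; each statement's English description precedes it below -/
import Mathlib

section
/- If A ∈ ℝ^{n×n} is a rate matrix, then the matrix exponential exp(A) is a (row-)stochastic matrix: all entries of exp(A) are nonnegative and every row of exp(A) sums to one. -/
open Matrix
open scoped Nat

attribute [local instance] Matrix.linftyOpSemiNormedRing Matrix.linftyOpNormedRing
  Matrix.linftyOpNormedAlgebra

section aux

variable {n : ℕ}

/-- entry evaluation as a continuous linear map -/
noncomputable def entryCLM (i j : Fin n) : Matrix (Fin n) (Fin n) ℝ →L[ℝ] ℝ :=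
  LinearMap.toContinuousLinearMap
    { toFun := fun M => M i j
      map_add' := fun _ _ => rfl
      map_smul' := fun _ _ => rfl }

@[simp] lemma entryCLM_apply (i j : Fin n) (M : Matrix (Fin n) (Fin n) ℝ) :
    entryCLM i j M = M i j := rfl

lemma entry_exp (A : Matrix (Fin n) (Fin n) ℝ) (i j : Fin n) :
    NormedSpace.exp A i j = ∑' k : ℕ, ((k ! : ℝ)⁻¹ • A ^ k) i j := by
  have h := (entryCLM i j).map_tsum (NormedSpace.expSeries_summable' (𝕂 := ℝ) A)
  rw [NormedSpace.exp_eq_tsum ℝ]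
  simpa using h

lemma pow_entry_nonneg {B : Matrix (Fin n) (Fin n) ℝ}
    (hB : ∀ i j, 0 ≤ B i j) : ∀ (k : ℕ) (i j : Fin n), 0 ≤ (B ^ k) i j := by
  intro k
  induction k with
  | zero =>
      intro i j
      by_cases h : i = j <;> simp [pow_zero, Matrix.one_apply, h]
  | succ m ih =>
      intro i j
      rw [pow_succ, Matrix.mul_apply]
      exact Finset.sum_nonneg fun l _ => mul_nonneg (ih i l) (hB l j)

end aux

/-- the exponential of a rate matrix is row-stochastic. -/
theorem stmt2 {n : ℕ}
    (A : Matrix (Fin n) (Fin n) ℝ)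
    (hMetzler : ∀ i j : Fin n, i ≠ j → 0 ≤ A i j)
    (hrow : A.mulVec (fun _ => (1 : ℝ)) = 0) :
    (∀ i j : Fin n, 0 ≤ NormedSpace.exp A i j) ∧
    (∀ i : Fin n, ∑ j : Fin n, NormedSpace.exp A i j = 1) := by
  constructor
  · -- nonnegativity
    -- choose c ≥ -A i i for all i
    intro i j
    obtain ⟨c, hc⟩ : ∃ c : ℝ, ∀ k : Fin n, 0 ≤ A k k + c := by
      refine ⟨∑ k, |A k k|, fun k => ?_⟩
      have h1 : |A k k| ≤ ∑ l, |A l l| :=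
        Finset.single_le_sum (f := fun l => |A l l|) (fun l _ => abs_nonneg _)
          (Finset.mem_univ k)
      have h2 : -A k k ≤ |A k k| := neg_le_abs _
      linarith
    set B : Matrix (Fin n) (Fin n) ℝ := A + c • (1 : Matrix (Fin n) (Fin n) ℝ) with hB
    have hBnn : ∀ i j, 0 ≤ B i j := by
      intro i j
      by_cases h : i = j
      · subst h
        simpa [hB, Matrix.one_apply] using hc i
      · simpa [hB, Matrix.one_apply, h] using hMetzler i j h
    have hcomm : Commute (-(c • (1 : Matrix (Fin n) (Fin n) ℝ))) B := by
      apply Commute.neg_left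
      exact (Commute.one_left B).smul_left c
    have hsplit : NormedSpace.exp A =
        NormedSpace.exp (-(c • (1 : Matrix (Fin n) (Fin n) ℝ))) * NormedSpace.exp B := by
      rw [← Matrix.exp_add_of_commute _ _ hcomm]
      congr 1
      simp [hB]
    have hscal : NormedSpace.exp (-(c • (1 : Matrix (Fin n) (Fin n) ℝ))) =
        Real.exp (-c) • (1 : Matrix (Fin n) (Fin n) ℝ) := by
      have : -(c • (1 : Matrix (Fin n) (Fin n) ℝ)) =
          algebraMap ℝ (Matrix (Fin n) (Fin n) ℝ) (-c) := by
        simp [Algebra.algebraMap_eq_smul_one]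
      rw [this]
      erw [← NormedSpace.algebraMap_exp_comm]
      rw [Algebra.algebraMap_eq_smul_one,
        Real.exp_eq_exp_ℝ]
    have hexpB : ∀ i j, 0 ≤ NormedSpace.exp B i j := by
      intro i j
      rw [entry_exp]
      apply tsum_nonneg
      intro k
      have := pow_entry_nonneg hBnn k i j
      have hk : (0:ℝ) ≤ (k ! : ℝ)⁻¹ := by positivity
      simpa [Matrix.smul_apply] using mul_nonneg hk this
    rw [hsplit, hscal, Matrix.smul_mul, Matrix.one_mul, Matrix.smul_apply, smul_eq_mul]
    exact mul_nonneg (Real.exp_nonneg _) (hexpB i j)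
  · -- row sums
    intro i
    -- linear map M ↦ (M.mulVec 1) i
    let L : Matrix (Fin n) (Fin n) ℝ →L[ℝ] ℝ :=
      LinearMap.toContinuousLinearMap
        { toFun := fun M => M.mulVec (fun _ => (1:ℝ)) i
          map_add' := fun M N => by simp [Matrix.add_mulVec]
          map_smul' := fun r M => by simp [Matrix.smul_mulVec] }
    have hL : ∀ M : Matrix (Fin n) (Fin n) ℝ, L M = M.mulVec (fun _ => (1:ℝ)) i := fun _ => rfl
    have hpow : ∀ k : ℕ, k ≠ 0 → (A ^ k).mulVec (fun _ => (1:ℝ)) = 0 := by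
      intro k hk
      obtain ⟨m, rfl⟩ := Nat.exists_eq_succ_of_ne_zero hk
      rw [pow_succ, ← Matrix.mulVec_mulVec, hrow, Matrix.mulVec_zero]
    have h1 : L (NormedSpace.exp A) = ∑' k : ℕ, L ((k ! : ℝ)⁻¹ • A ^ k) := by
      rw [NormedSpace.exp_eq_tsum ℝ]
      exact L.map_tsum (NormedSpace.expSeries_summable' (𝕂 := ℝ) A)
    have h2 : ∑' k : ℕ, L ((k ! : ℝ)⁻¹ • A ^ k) = 1 := by
      rw [tsum_eq_single 0]
      · simp [hL, Matrix.mulVec, Matrix.one_apply, dotProduct]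
      · intro k hk
        rw [hL, Matrix.smul_mulVec, hpow k hk]
        simp
    have h3 : L (NormedSpace.exp A) = ∑ j : Fin n, NormedSpace.exp A i j := by
      rw [hL]
      simp [Matrix.mulVec, dotProduct]
    rw [← h3, h1, h2]
end

section
/- Let Q, Q^‡ ∈ ℝ^{n×n} satisfy Q Q^‡ Q = Q and Q^‡ Q = Q Q^‡, and set W = I − Q^‡Q. Let k > 0, ω^u ∈ ℝⁿ and θ₀ ∈ ℝⁿ. Then the function θ̃(t) = (Wt + k⁻¹Q^‡(exp(kQt) − I))ω^u + exp(kQt)θ₀ satisfies θ̃(0) = θ₀ and the differential equation θ̃'(t) = kQθ̃(t) + ω^u for all t ∈ ℝ. -/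
open Matrix

section
attribute [local instance] Matrix.linftyOpNormedAddCommGroup Matrix.linftyOpNormedSpace
  Matrix.linftyOpNormedRing Matrix.linftyOpNormedAlgebra

lemma auxDeriv {n : ℕ} (A B : Matrix (Fin n) (Fin n) ℝ) (v : Fin n → ℝ) (t : ℝ) :
    HasDerivAt (fun s : ℝ => (B * NormedSpace.exp (s • A)).mulVec v)
      ((B * (A * NormedSpace.exp (t • A))).mulVec v) t := by
  have h := hasDerivAt_exp_smul_const' (𝕂 := ℝ) A t
  let L : Matrix (Fin n) (Fin n) ℝ →ₗ[ℝ] (Fin n → ℝ) :=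
    { toFun := fun M => (B * M).mulVec v
      map_add' := by intro M N; simp [mul_add, Matrix.add_mulVec]
      map_smul' := by intro c M; simp [Matrix.mul_smul, Matrix.smul_mulVec] }
  have := (L.toContinuousLinearMap.hasFDerivAt
    (x := NormedSpace.exp (t • A))).comp_hasDerivAt t h
  exact this

end

/-- explicit solution of the proportionally controlled dynamics. -/
theorem stmt5 {n : ℕ}
    (Q Qd : Matrix (Fin n) (Fin n) ℝ)
    (hgen : Q * Qd * Q = Q)
    (hcomm : Qd * Q = Q * Qd)
    (W : Matrix (Fin n) (Fin n) ℝ)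
    (hW : W = 1 - Qd * Q)
    (k : ℝ) (hk : 0 < k)
    (ωu θ0 : Fin n → ℝ)
    (θt : ℝ → Fin n → ℝ)
    (hθt : ∀ t : ℝ, θt t =
      (t • W + k⁻¹ • (Qd * (NormedSpace.exp ((k * t) • Q) - 1))).mulVec ωu +
      (NormedSpace.exp ((k * t) • Q)).mulVec θ0) :
    θt 0 = θ0 ∧
    ∀ t : ℝ, HasDerivAt θt (k • (Q.mulVec (θt t)) + ωu) t := by
  have hsm : ∀ s : ℝ, (k * s) • Q = s • (k • Q) := fun s => by
    rw [mul_comm, mul_smul]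
  constructor
  · rw [hθt 0]
    simp [NormedSpace.exp_zero]
  · intro t
    have hfun : θt = fun s : ℝ =>
        ((s • W.mulVec ωu + k⁻¹ • (Qd * NormedSpace.exp (s • (k • Q))).mulVec ωu)
          - k⁻¹ • Qd.mulVec ωu) + (NormedSpace.exp (s • (k • Q))).mulVec θ0 := by
      funext s
      rw [hθt s, hsm s]
      simp [Matrix.add_mulVec, Matrix.sub_mulVec, Matrix.smul_mulVec, mul_sub,
        smul_sub, Matrix.smul_mulVec]
      abel
    have h1 : HasDerivAt (fun s : ℝ => s • W.mulVec ωu) (W.mulVec ωu) t := by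
      simpa using (hasDerivAt_id t).smul_const (W.mulVec ωu)
    have h2 := (auxDeriv (k • Q) Qd ωu t).const_smul k⁻¹
    have h3 := auxDeriv (k • Q) 1 θ0 t
    simp only [one_mul] at h3
    have hD := (((h1.add h2).sub_const (k⁻¹ • Qd.mulVec ωu)).add h3)
    replace hD := hD.congr_of_eventuallyEq (Filter.EventuallyEq.of_eq (f := θt) (by rw [hfun]; rfl))
    refine hD.congr_deriv (Eq.symm ?_)
    rw [hθt t, hsm t]
    have hQW : Q * W = 0 := by
      rw [hW, mul_sub, mul_one, ← mul_assoc, hgen, sub_self]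
    set E := NormedSpace.exp (t • (k • Q)) with hE
    have hk' : k ≠ 0 := hk.ne'
    simp only [Matrix.add_mulVec, Matrix.sub_mulVec, Matrix.smul_mulVec,
      Matrix.mulVec_add, Matrix.mulVec_sub, Matrix.mulVec_smul, Matrix.mulVec_mulVec, Matrix.one_mulVec,
      mul_sub, mul_one, mul_add, smul_add, smul_sub, smul_smul, Matrix.mul_smul,
      Matrix.smul_mul, mul_assoc]
    simp only [mul_inv_cancel₀ hk', inv_mul_cancel₀ hk', one_smul]
    rw [hW]
    have hQW2 : Q * (1 - Q * Qd) = 0 := by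
      rw [mul_sub, mul_one, ← hcomm, ← mul_assoc, hgen, sub_self]
    simp only [Matrix.sub_mulVec, Matrix.one_mulVec, ← mul_assoc, hgen, hcomm, hQW, hQW2,
      Matrix.zero_mulVec, smul_zero]
    abel
end

section
/- Let k₂ > 0, let t₁ < t₂ be real numbers, and let x : ℝ → ℝ be differentiable on [t₁, t₂] with x'(t) = −k₂·sign(x(t)) for all t ∈ [t₁, t₂]. Set h = |x(t₁)|/k₂ and suppose t₂ ≥ t₁ + h. Then x(t) = 0 for all t ∈ [t₁ + h, t₂]. -/
open Set

private lemma sign_eq_of_no_zero (x : ℝ → ℝ) {a b : ℝ} (hab : a ≤ b)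
    (hc : ContinuousOn x (Icc a b)) (hnz : ∀ t ∈ Icc a b, x t ≠ 0) :
    Real.sign (x a) = Real.sign (x b) := by
  have ha := hnz a ⟨le_refl a, hab⟩
  have hb := hnz b ⟨hab, le_refl b⟩
  rcases ha.lt_or_gt with h1 | h1 <;> rcases hb.lt_or_gt with h2 | h2
  · rw [Real.sign_of_neg h1, Real.sign_of_neg h2]
  · exfalso
    obtain ⟨u, hu, hxu⟩ := intermediate_value_Icc hab hc ⟨h1.le, h2.le⟩
    exact hnz u hu hxu
  · exfalso
    obtain ⟨u, hu, hxu⟩ := intermediate_value_Icc' hab hc ⟨h2.le, h1.le⟩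
    exact hnz u hu hxu
  · rw [Real.sign_of_pos h1, Real.sign_of_pos h2]

private lemma absorb (k₂ t₁ t₂ : ℝ) (hk : 0 < k₂) (x : ℝ → ℝ)
    (hcont : ContinuousOn x (Icc t₁ t₂))
    (hderiv : ∀ c ∈ Ioo t₁ t₂, HasDerivAt x (-(k₂ * Real.sign (x c))) c)
    (t₀ : ℝ) (ht₀ : t₀ ∈ Icc t₁ t₂) (hx0 : x t₀ = 0) :
    ∀ t ∈ Icc t₀ t₂, x t = 0 := by
  intro T hT
  by_contra hne
  have hT1 : t₁ ≤ T := ht₀.1.trans hT.1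
  set S := {u : ℝ | u ∈ Icc t₀ T ∧ x u = 0} with hS
  have hSne : S.Nonempty := ⟨t₀, ⟨le_refl _, hT.1⟩, hx0⟩
  have hSbdd : BddAbove S := ⟨T, fun u hu => hu.1.2⟩
  have hSclosed : IsClosed S := by
    have : S = Icc t₀ T ∩ x ⁻¹' {0} := by
      ext u; exact Iff.rfl
    rw [this]
    exact (hcont.mono (Icc_subset_Icc ht₀.1 hT.2)).preimage_isClosed_of_isClosed
      isClosed_Icc isClosed_singleton
  set s := sSup S with hsdef
  have hsmem : s ∈ S := hSclosed.csSup_mem hSne hSbdd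
  have hsT : s < T := lt_of_le_of_ne hsmem.1.2 (fun hc => hne (hc ▸ hsmem.2))
  have hnz : ∀ u, s < u → u ≤ T → x u ≠ 0 := by
    intro u hu1 hu2 hxu
    have : u ∈ S := ⟨⟨hsmem.1.1.trans hu1.le, hu2⟩, hxu⟩
    exact absurd (le_csSup hSbdd this) (not_le.mpr hu1)
  have hsub : Icc s T ⊆ Icc t₁ t₂ :=
    Icc_subset_Icc (ht₀.1.trans hsmem.1.1) hT.2
  obtain ⟨c, hc, heq⟩ := exists_hasDerivAt_eq_slope x
    (fun t => -(k₂ * Real.sign (x t))) hsT (hcont.mono hsub)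
    (fun u hu => hderiv u ⟨lt_of_le_of_lt (ht₀.1.trans hsmem.1.1) hu.1,
      lt_of_lt_of_le hu.2 hT.2⟩)
  have hsc : Real.sign (x c) = Real.sign (x T) := by
    refine sign_eq_of_no_zero x hc.2.le
      (hcont.mono (Icc_subset_Icc (hsub ⟨hc.1.le, hc.2.le⟩).1 hT.2)) ?_
    intro u hu
    exact hnz u (lt_of_lt_of_le hc.1 hu.1) hu.2
  rw [hsmem.2, sub_zero, hsc] at heq
  have hTs : 0 < T - s := by linarith
  rcases lt_or_gt_of_ne hne with h1 | h1
  · rw [Real.sign_of_neg h1] at heq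
    have : x T / (T - s) < 0 := div_neg_of_neg_of_pos h1 hTs
    nlinarith
  · rw [Real.sign_of_pos h1] at heq
    have : 0 < x T / (T - s) := div_pos h1 hTs
    nlinarith

/-- the scalar on-off system x' = −k₂ sign(x) reaches zero in time
h = |x(t₁)|/k₂ and stays there. -/
theorem stmt9 (k₂ t₁ t₂ : ℝ) (hk : 0 < k₂) (ht12 : t₁ < t₂)
    (x : ℝ → ℝ)
    (hx : ∀ t ∈ Icc t₁ t₂,
      HasDerivWithinAt x (-(k₂ * Real.sign (x t))) (Icc t₁ t₂) t)
    (h : ℝ) (hh : h = |x t₁| / k₂)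
    (ht : t₁ + h ≤ t₂) :
    ∀ t ∈ Icc (t₁ + h) t₂, x t = 0 := by
  have hcont : ContinuousOn x (Icc t₁ t₂) := fun t ht' => (hx t ht').continuousWithinAt
  have hderiv : ∀ c ∈ Ioo t₁ t₂, HasDerivAt x (-(k₂ * Real.sign (x c))) c := by
    intro c hc
    exact (hx c ⟨hc.1.le, hc.2.le⟩).hasDerivAt (Icc_mem_nhds hc.1 hc.2)
  have hh0 : 0 ≤ h := by
    rw [hh]; positivity
  have step1 : ∃ t₀ ∈ Icc t₁ (t₁ + h), x t₀ = 0 := by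
    by_contra hcon
    push_neg at hcon
    have hx1 : x t₁ ≠ 0 := hcon t₁ ⟨le_refl _, by linarith⟩
    have hhpos : 0 < h := by
      rw [hh]; exact div_pos (abs_pos.mpr hx1) hk
    have hlt : t₁ < t₁ + h := by linarith
    obtain ⟨c, hc, heq⟩ := exists_hasDerivAt_eq_slope x
      (fun t => -(k₂ * Real.sign (x t))) hlt
      (hcont.mono (Icc_subset_Icc le_rfl ht))
      (fun u hu => hderiv u ⟨hu.1, lt_of_lt_of_le hu.2 ht⟩)
    have hsc : Real.sign (x t₁) = Real.sign (x c) := by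
      refine sign_eq_of_no_zero x hc.1.le
        (hcont.mono (Icc_subset_Icc le_rfl (hc.2.le.trans ht))) ?_
      intro u hu
      exact hcon u ⟨hu.1, hu.2.trans hc.2.le⟩
    rw [← hsc, add_sub_cancel_left] at heq
    rw [eq_div_iff (ne_of_gt hhpos)] at heq
    have hkh : k₂ * h = |x t₁| := by
      rw [hh]; field_simp
    have hsa : Real.sign (x t₁) * |x t₁| = x t₁ := by
      rcases lt_or_gt_of_ne hx1 with hs | hs
      · rw [Real.sign_of_neg hs, abs_of_neg hs]; ring
      · rw [Real.sign_of_pos hs, abs_of_pos hs]; ring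
    have hz : x (t₁ + h) = 0 := by
      linear_combination -heq - Real.sign (x t₁) * hkh - hsa
    exact hcon (t₁ + h) ⟨hlt.le, le_refl _⟩ hz
  obtain ⟨t₀, ht₀, hx0⟩ := step1
  intro t htmem
  exact absorb k₂ t₁ t₂ hk x hcont hderiv t₀
    ⟨ht₀.1, ht₀.2.trans ht⟩ hx0 t ⟨ht₀.2.trans htmem.1, htmem.2⟩
end

section
/- Let T ⊆ {1,…,m} be an outward directed spanning tree rooted at r, and let g₁, …, g_{n−1} be an enumeration of the edges of T consistent with its natural partial order (i.e., g_i ≺ g_j implies i < j). Let x₁ ∈ ℝᵐ and define recursively x_{j+1} = (I + BᵀDE^{g_j})x_j for j = 1, …, n−1. Then (x_n)_a = 0 for every edge a ∈ T. -/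
open Matrix

/-- applying the centering steps in an order consistent with the
partial order of an outward directed spanning tree zeroes all tree entries. -/
theorem stmt13 {n m : ℕ}
    (src dst : Fin m → Fin n) (hloop : ∀ e, src e ≠ dst e)
    (S D B : Matrix (Fin n) (Fin m) ℝ)
    (hS : S = Matrix.of fun i e => if src e = i then (1 : ℝ) else 0)
    (hD : D = Matrix.of fun i e => if dst e = i then (1 : ℝ) else 0)
    (hB : B = S - D)
    (r : Fin n) (T : Finset (Fin m))
    (hcard : T.card = n - 1)
    (hroot : ∀ e ∈ T, dst e ≠ r)
    (huniq : ∀ v : Fin n, v ≠ r → ∃! e : Fin m, e ∈ T ∧ dst e = v)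
    (hreach : ∀ v : Fin n,
      Relation.ReflTransGen (fun a b : Fin n => ∃ e ∈ T, src e = a ∧ dst e = b) r v)
    (g : Fin (n - 1) → Fin m)
    (hginj : Function.Injective g)
    (hgmem : ∀ j, g j ∈ T)
    (hgsurj : ∀ e ∈ T, ∃ j, g j = e)
    (horder : ∀ i j : Fin (n - 1),
      Relation.TransGen (fun a b : Fin n => ∃ e ∈ T, src e = a ∧ dst e = b)
        (dst (g i)) (dst (g j)) → i < j)
    (x : ℕ → Fin m → ℝ)
    (hrec : ∀ (j : ℕ) (hj : j < n - 1),
      x (j + 1) =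
        (1 + Bᵀ * D * single (g ⟨j, hj⟩) (g ⟨j, hj⟩) (1 : ℝ)).mulVec (x j)) :
    ∀ a ∈ T, x (n - 1) a = 0 := by
  -- entrywise formula for one recursion step
  have hentry : ∀ (j : ℕ) (hj : j < n - 1) (a : Fin m),
      x (j + 1) a = x j a + x j (g ⟨j, hj⟩) *
        ((if src a = dst (g ⟨j, hj⟩) then 1 else 0)
          - (if dst a = dst (g ⟨j, hj⟩) then (1 : ℝ) else 0)) := by
    intro j hj a
    rw [hrec j hj]
    subst hB hS hD
    set gg := g ⟨j, hj⟩
    simp only [Matrix.add_mulVec, Matrix.one_mulVec, Matrix.mulVec, Matrix.mul_apply, dotProduct,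
      Matrix.single, Matrix.transpose_apply, Matrix.sub_apply, Matrix.of_apply, Pi.add_apply,
      Matrix.add_apply, Matrix.one_apply, ite_and, ite_mul, mul_ite, mul_one, mul_zero, zero_mul,
      one_mul, sub_mul, Finset.sum_sub_distrib, Finset.sum_add_distrib, Finset.sum_ite_eq,
      Finset.sum_ite_eq', Finset.mem_univ, if_true]
    simp only [add_mul, Finset.sum_add_distrib, ite_mul, one_mul, zero_mul]
    simp [ite_mul, Finset.sum_ite_eq]
    ring
  -- destinations of tree edges are distinct
  have hdstinj : ∀ a ∈ T, ∀ b ∈ T, dst a = dst b → a = b := by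
    intro a ha b hb hab
    obtain ⟨e, he, hu⟩ := huniq (dst a) (hroot a ha)
    rw [hu a ⟨ha, rfl⟩, hu b ⟨hb, hab.symm⟩]
  -- main invariant
  have key : ∀ (j : ℕ), j ≤ n - 1 → ∀ (k : ℕ) (hk : k < n - 1), k < j →
      x j (g ⟨k, hk⟩) = 0 := by
    intro j
    induction j with
    | zero => intro _ k hk hkj; omega
    | succ j ih =>
      intro hj k hk hkj
      have hj' : j < n - 1 := by omega
      rw [hentry j hj']
      rcases Nat.lt_or_ge k j with h | h
      · rw [ih (le_of_lt hj') k hk h]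
        have h1 : src (g ⟨k, hk⟩) ≠ dst (g ⟨j, hj'⟩) := by
          intro hEq
          have htg : Relation.TransGen (fun a b : Fin n => ∃ e ∈ T, src e = a ∧ dst e = b)
              (dst (g ⟨j, hj'⟩)) (dst (g ⟨k, hk⟩)) :=
            Relation.TransGen.single ⟨g ⟨k, hk⟩, hgmem _, hEq, rfl⟩
          have := horder _ _ htg
          simp [Fin.lt_def] at this
          omega
        have h2 : dst (g ⟨k, hk⟩) ≠ dst (g ⟨j, hj'⟩) := by
          intro hEq
          have heq := hginj (hdstinj _ (hgmem _) _ (hgmem _) hEq)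
          simp [Fin.ext_iff] at heq
          omega
        simp [h1, h2]
      · have hkj' : k = j := by omega
        subst hkj'
        have hl : src (g ⟨k, hk⟩) ≠ dst (g ⟨k, hj'⟩) := hloop _
        have he : (⟨k, hk⟩ : Fin (n - 1)) = ⟨k, hj'⟩ := rfl
        rw [he]
        simp [hl]
  intro a ha
  obtain ⟨k, rfl⟩ := hgsurj a ha
  have := key (n - 1) le_rfl k.val k.isLt k.isLt
  simpa using this
end

section
/- Suppose the edges {1,…,n−1} form a spanning tree of the underlying undirected graph (the graph obtained by forgetting edge directions is a tree on all n vertices). Partition the incidence matrix as B = [[B₁₁, B₁₂], [−𝟙ᵀB₁₁, −𝟙ᵀB₁₂]], where B₁₁ ∈ ℝ^{(n−1)×(n−1)} consists of rows 1,…,n−1 and columns 1,…,n−1 and B₁₂ ∈ ℝ^{(n−1)×(m−n+1)} of rows 1,…,n−1 and columns n,…,m. Then B₁₁ is invertible and, with N = B₁₁⁻¹B₁₂, the factorization B = [[B₁₁, 0], [−𝟙ᵀB₁₁, 1]] · [[I, 0], [0, 0]] · [[I, N], [0, I]] holds, where the middle factor is the n×m matrix with the (n−1)×(n−1) identity in its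 top-left block and zeros elsewhere. -/
open Matrix

/-- block factorization of the incidence matrix with respect to a
spanning tree consisting of the first n−1 edges (Theorem of Smith-type form). -/
theorem stmt15 {n m : ℕ} (hn : 0 < n) (hmn : n - 1 ≤ m)
    (src dst : Fin m → Fin n) (hloop : ∀ e, src e ≠ dst e)
    (S D B : Matrix (Fin n) (Fin m) ℝ)
    (hS : S = Matrix.of fun i e => if src e = i then (1 : ℝ) else 0)
    (hD : D = Matrix.of fun i e => if dst e = i then (1 : ℝ) else 0)
    (hB : B = S - D)
    (G : SimpleGraph (Fin n))
    (hG : G = SimpleGraph.fromRel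
      (fun u v : Fin n => ∃ e : Fin m, e.val < n - 1 ∧ src e = u ∧ dst e = v))
    (htree : G.IsTree)
    -- the obvious bijections realizing the partitions of vertices and edges
    (eN : Fin (n - 1) ⊕ Unit → Fin n)
    (heN : ∀ i : Fin (n - 1), eN (Sum.inl i) = Fin.castLE (Nat.sub_le n 1) i)
    (heN' : eN (Sum.inr ()) = ⟨n - 1, by omega⟩)
    (eM : Fin (n - 1) ⊕ Fin (m - (n - 1)) → Fin m)
    (heM : ∀ e : Fin (n - 1), eM (Sum.inl e) = Fin.castLE hmn e)
    (heM' : ∀ e : Fin (m - (n - 1)), eM (Sum.inr e) = ⟨(n - 1) + e.val, by omega⟩)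
    -- the blocks of the incidence matrix
    (B11 : Matrix (Fin (n - 1)) (Fin (n - 1)) ℝ)
    (hB11 : B11 = Matrix.of fun i e => B (eN (Sum.inl i)) (eM (Sum.inl e)))
    (B12 : Matrix (Fin (n - 1)) (Fin (m - (n - 1))) ℝ)
    (hB12 : B12 = Matrix.of fun i e => B (eN (Sum.inl i)) (eM (Sum.inr e))) :
    -- the claimed partition B = [[B₁₁, B₁₂], [−𝟙ᵀB₁₁, −𝟙ᵀB₁₂]]
    (Matrix.of fun i e => B (eN i) (eM e)) =
      fromBlocks B11 B12
        (Matrix.of fun _ j => -∑ i, B11 i j)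
        (Matrix.of fun _ j => -∑ i, B12 i j) ∧
    -- B₁₁ is invertible
    IsUnit B11 ∧
    -- the factorization with N = B₁₁⁻¹ B₁₂
    (Matrix.of fun i e => B (eN i) (eM e)) =
      fromBlocks B11 0 (Matrix.of fun _ j => -∑ i, B11 i j)
          (1 : Matrix Unit Unit ℝ) *
      fromBlocks (1 : Matrix (Fin (n - 1)) (Fin (n - 1)) ℝ) 0 0
          (0 : Matrix Unit (Fin (m - (n - 1))) ℝ) *
      fromBlocks 1 (B11⁻¹ * B12) 0 (1 : Matrix (Fin (m - (n - 1))) (Fin (m - (n - 1))) ℝ) := by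
  -- entrywise formula and column-sum zero
  have hBent : ∀ v e, B v e =
      (if src e = v then (1:ℝ) else 0) - (if dst e = v then (1:ℝ) else 0) := by
    intro v e; rw [hB, hS, hD]; simp
  have hcol : ∀ e, ∑ v, B v e = 0 := by
    intro e
    simp only [hBent, Finset.sum_sub_distrib]
    simp
  -- eN is bijective
  have heNinj : Function.Injective eN := by
    intro a b hab
    match a, b with
    | Sum.inl i, Sum.inl j =>
      rw [heN, heN] at hab
      exact congrArg Sum.inl (Fin.castLE_injective _ hab)
    | Sum.inl i, Sum.inr u =>
      rw [heN, heN'] at hab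
      have := congrArg Fin.val hab
      simp at this; omega
    | Sum.inr u, Sum.inl j =>
      rw [heN', heN] at hab
      have := congrArg Fin.val hab
      simp at this; omega
    | Sum.inr u, Sum.inr v => rfl
  have heNbij : Function.Bijective eN := by
    refine (Fintype.bijective_iff_injective_and_card eN).2 ⟨heNinj, ?_⟩
    simp; omega
  -- splitting column sums
  have hsplit : ∀ E : Fin m,
      (∑ i : Fin (n-1), B (eN (Sum.inl i)) E) + B (eN (Sum.inr ())) E = 0 := by
    intro E
    have h1 : ∑ s : Fin (n-1) ⊕ Unit, B (eN s) E = ∑ v, B v E :=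
      Fintype.sum_bijective eN heNbij _ _ (fun s => rfl)
    rw [Fintype.sum_sum_type] at h1
    simpa using h1.trans (hcol E)
  -- Part 1 : block partition
  have part1 : (Matrix.of fun i e => B (eN i) (eM e)) =
      fromBlocks B11 B12
        (Matrix.of fun _ j => -∑ i, B11 i j)
        (Matrix.of fun _ j => -∑ i, B12 i j) := by
    ext i e
    match i, e with
    | Sum.inl i, Sum.inl e => simp [fromBlocks, hB11]
    | Sum.inl i, Sum.inr e => simp [fromBlocks, hB12]
    | Sum.inr u, Sum.inl e =>
      have := hsplit (eM (Sum.inl e))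
      simp only [fromBlocks, Matrix.of_apply, Sum.elim_inr, Sum.elim_inl, hB11]
      linarith
    | Sum.inr u, Sum.inr e =>
      have := hsplit (eM (Sum.inr e))
      simp only [fromBlocks, Matrix.of_apply, Sum.elim_inr, hB12]
      linarith
  -- Part 2 : invertibility of B11
  have part2 : IsUnit B11 := by
    rw [Matrix.isUnit_iff_isUnit_det, isUnit_iff_ne_zero]
    rw [← Matrix.det_transpose]
    intro hdet
    obtain ⟨x, hx0, hx⟩ := (Matrix.exists_mulVec_eq_zero_iff).2 hdet
    apply hx0
    -- extend x by zero to all vertices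
    set y : Fin n → ℝ := fun v => if h : v.val < n - 1 then x ⟨v.val, h⟩ else 0 with hy
    have hyroot : y ⟨n - 1, by omega⟩ = 0 := by simp [hy]
    have hxy : ∀ i : Fin (n-1), x i = y (eN (Sum.inl i)) := by
      intro i
      rw [heN]
      simp [hy, i.isLt]
    -- the kernel equation gives y (src E) = y (dst E) for tree edges
    have hkey : ∀ e : Fin (n-1),
        y (src (eM (Sum.inl e))) - y (dst (eM (Sum.inl e))) = 0 := by
      intro e
      have h0 : B11ᵀ.mulVec x e = 0 := by rw [hx]; rfl
      have h1 : ∑ i : Fin (n-1), B (eN (Sum.inl i)) (eM (Sum.inl e)) * x i = 0 := by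
        simpa [Matrix.mulVec, dotProduct, Matrix.transpose_apply, hB11] using h0
      have h2 : ∑ s : Fin (n-1) ⊕ Unit, B (eN s) (eM (Sum.inl e)) * y (eN s)
          = ∑ v, B v (eM (Sum.inl e)) * y v :=
        Fintype.sum_bijective eN heNbij _ _ (fun s => rfl)
      rw [Fintype.sum_sum_type] at h2
      simp only [Fintype.sum_unique] at h2
      have h3 : ∑ v, B v (eM (Sum.inl e)) * y v = 0 := by
        rw [← h2]
        have : B (eN (Sum.inr ())) (eM (Sum.inl e)) * y (eN (Sum.inr ())) = 0 := by
          rw [heN', hyroot, mul_zero]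
        rw [this, add_zero]
        rw [← h1]
        exact Finset.sum_congr rfl fun i _ => by rw [← hxy]
      have h4 : ∑ v, B v (eM (Sum.inl e)) * y v
          = y (src (eM (Sum.inl e))) - y (dst (eM (Sum.inl e))) := by
        simp only [hBent, sub_mul, ite_mul, one_mul, zero_mul, Finset.sum_sub_distrib]
        rw [Finset.sum_ite_eq, Finset.sum_ite_eq]
        simp
      rw [← h4, h3]
    -- y is constant along edges of G
    have hadj : ∀ u v : Fin n, G.Adj u v → y u = y v := by
      intro u v huv
      rw [hG, SimpleGraph.fromRel_adj] at huv
      obtain ⟨-, h | h⟩ := huv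
      · obtain ⟨e, he, hsrc, hdst⟩ := h
        have heq : eM (Sum.inl ⟨e.val, he⟩) = e := by
          rw [heM]; ext; simp
        have := hkey ⟨e.val, he⟩
        rw [heq, hsrc, hdst] at this
        linarith
      · obtain ⟨e, he, hsrc, hdst⟩ := h
        have heq : eM (Sum.inl ⟨e.val, he⟩) = e := by
          rw [heM]; ext; simp
        have := hkey ⟨e.val, he⟩
        rw [heq, hsrc, hdst] at this
        linarith
    have hwalk : ∀ (u v : Fin n) (p : G.Walk u v), y u = y v := by
      intro u v p
      induction p with
      | nil => rfl
      | cons h p ih => exact (hadj _ _ h).trans ih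
    have hyall : ∀ v, y v = 0 := by
      intro v
      obtain ⟨p⟩ := htree.isConnected.preconnected v ⟨n - 1, by omega⟩
      rw [hwalk _ _ p, hyroot]
    funext i
    rw [hxy i, hyall]
    rfl
  refine ⟨part1, part2, ?_⟩
  -- Part 3 : the factorization
  have hUdet : IsUnit B11.det := (Matrix.isUnit_iff_isUnit_det B11).1 part2
  have h3 : B11 * (B11⁻¹ * B12) = B12 := Matrix.mul_nonsing_inv_cancel_left _ _ hUdet
  have hrow : ∀ {k : ℕ} (M : Matrix (Fin (n-1)) (Fin k) ℝ),
      (Matrix.of fun (_ : Unit) j => -∑ i, M i j)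
        = (Matrix.of fun (_ : Unit) (_ : Fin (n-1)) => (-1:ℝ)) * M := by
    intro k M
    ext u j
    simp [Matrix.mul_apply]
  have h4 : (Matrix.of fun (_ : Unit) j => -∑ i, B11 i j) * (B11⁻¹ * B12)
      = Matrix.of fun (_ : Unit) j => -∑ i, B12 i j := by
    rw [hrow B11, hrow B12, Matrix.mul_assoc, h3]
  rw [part1, Matrix.fromBlocks_multiply, Matrix.fromBlocks_multiply]
  simp only [Matrix.mul_one, Matrix.mul_zero, Matrix.zero_mul, Matrix.one_mul,
    add_zero, zero_add, Matrix.mul_assoc]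
  rw [h3, h4]
end

section
/- Let T ⊆ {1,…,m} be an outward directed spanning tree rooted at r, and let g₁, …, g_{n−1} be an enumeration of the edges of T consistent with its natural partial order (i.e., g_i ≺ g_j implies i < j). Let x₁ ∈ ℝᵐ lie in the range of Bᵀ (i.e., x₁ = Bᵀθ for some θ ∈ ℝⁿ) and define recursively x_{j+1} = (I + BᵀDE^{g_j})x_j for j = 1, …, n−1. Then x_n = 0; that is, after applying the n−1 centering steps, all m buffer occupancies are zero. -/
open Matrix

/-- Auxiliary potential function for the centering-steps proof. -/
def stmt17Phi {n m : ℕ} (src dst : Fin m → Fin n) (g : Fin (n - 1) → Fin m)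
    (θ : Fin n → ℝ) : ℕ → Fin n → ℝ
  | 0 => θ
  | (j + 1) =>
    if h : j < n - 1 then
      Function.update (stmt17Phi src dst g θ j) (dst (g ⟨j, h⟩))
        ((stmt17Phi src dst g θ j) (src (g ⟨j, h⟩)))
    else stmt17Phi src dst g θ j

/-- if the initial buffer occupancy lies in range(Bᵀ), the
spanning-tree ordered centering steps zero ALL buffer occupancies. -/
theorem stmt17 {n m : ℕ}
    (src dst : Fin m → Fin n) (hloop : ∀ e, src e ≠ dst e)
    (S D B : Matrix (Fin n) (Fin m) ℝ)
    (hS : S = Matrix.of fun i e => if src e = i then (1 : ℝ) else 0)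
    (hD : D = Matrix.of fun i e => if dst e = i then (1 : ℝ) else 0)
    (hB : B = S - D)
    (r : Fin n) (T : Finset (Fin m))
    (hcard : T.card = n - 1)
    (hroot : ∀ e ∈ T, dst e ≠ r)
    (huniq : ∀ v : Fin n, v ≠ r → ∃! e : Fin m, e ∈ T ∧ dst e = v)
    (hreach : ∀ v : Fin n,
      Relation.ReflTransGen (fun a b : Fin n => ∃ e ∈ T, src e = a ∧ dst e = b) r v)
    (g : Fin (n - 1) → Fin m)
    (hginj : Function.Injective g)
    (hgmem : ∀ j, g j ∈ T)
    (hgsurj : ∀ e ∈ T, ∃ j, g j = e)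
    (horder : ∀ i j : Fin (n - 1),
      Relation.TransGen (fun a b : Fin n => ∃ e ∈ T, src e = a ∧ dst e = b)
        (dst (g i)) (dst (g j)) → i < j)
    (x : ℕ → Fin m → ℝ)
    (θ : Fin n → ℝ) (hx0 : x 0 = Bᵀ.mulVec θ)
    (hrec : ∀ (j : ℕ) (hj : j < n - 1),
      x (j + 1) =
        (1 + Bᵀ * D * Matrix.single (g ⟨j, hj⟩) (g ⟨j, hj⟩) (1 : ℝ)).mulVec (x j)) :
    x (n - 1) = 0 := by
  set φ := stmt17Phi src dst g θ with hφ
  -- entries of B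
  have hBent : ∀ (v : Fin n) (e : Fin m),
      B v e = (if src e = v then (1:ℝ) else 0) - (if dst e = v then (1:ℝ) else 0) := by
    intro v e; simp [hB, hS, hD]
  -- destinations of tree edges are injective
  have hdstinj : ∀ i j : Fin (n - 1), dst (g i) = dst (g j) → i = j := by
    intro i j hij
    have hir : dst (g i) ≠ r := hroot _ (hgmem i)
    obtain ⟨e, -, hu⟩ := huniq (dst (g i)) hir
    have h1 : g i = e := hu _ ⟨hgmem i, rfl⟩
    have h2 : g j = e := hu _ ⟨hgmem j, hij.symm⟩
    exact hginj (h1.trans h2.symm)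
  -- explicit form of one centering step
  have hstep : ∀ (j : ℕ) (hj : j < n - 1) (e : Fin m),
      x (j + 1) e = x j e + B (dst (g ⟨j, hj⟩)) e * x j (g ⟨j, hj⟩) := by
    intro j hj e
    rw [hrec j hj]
    subst hD
    simp only [Matrix.add_mulVec, Matrix.one_mulVec, Pi.add_apply]
    congr 1
    simp [Matrix.mulVec, Matrix.mul_apply, dotProduct,
      Matrix.single, ite_and, ite_mul, mul_ite, Finset.sum_ite_eq, Finset.sum_ite_eq']
  -- invariant: x j is the gradient of the potential φ j
  have hgrad : ∀ j : ℕ, j ≤ n - 1 → ∀ e : Fin m, x j e = φ j (src e) - φ j (dst e) := by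
    intro j
    induction j with
    | zero =>
      intro _ e
      rw [hx0]
      simp only [hφ, stmt17Phi]
      simp [Matrix.mulVec, dotProduct, hBent, sub_mul, Finset.sum_sub_distrib,
        ite_mul, Finset.sum_ite_eq, Finset.sum_ite_eq']
    | succ j ih =>
      intro hj1 e
      have hj : j < n - 1 := hj1
      have ihe := ih (le_of_lt hj)
      have hupd : φ (j + 1) = Function.update (φ j) (dst (g ⟨j, hj⟩))
          ((φ j) (src (g ⟨j, hj⟩))) := by
        simp [hφ, stmt17Phi, hj]
      rw [hstep j hj e, hupd, ihe e, ihe (g ⟨j, hj⟩), hBent]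
      have hse := hloop e
      by_cases h1 : src e = dst (g ⟨j, hj⟩) <;> by_cases h2 : dst e = dst (g ⟨j, hj⟩)
      · exact absurd (h1.trans h2.symm) hse
      all_goals simp only [Function.update_apply, h1, h2, if_true, if_false, if_pos, if_neg,
        not_false_iff, eq_self_iff_true]
      all_goals ring
  -- invariant: already-processed tree edges are flat for the potential
  have hflat : ∀ j : ℕ, j ≤ n - 1 → ∀ i : Fin (n - 1), (i : ℕ) < j →
      φ j (dst (g i)) = φ j (src (g i)) := by
    intro j
    induction j with
    | zero => intro _ i hi; omega
    | succ j ih =>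
      intro hj1 i hi
      have hj : j < n - 1 := hj1
      have hupd : φ (j + 1) = Function.update (φ j) (dst (g ⟨j, hj⟩))
          ((φ j) (src (g ⟨j, hj⟩))) := by
        simp [hφ, stmt17Phi, hj]
      rw [hupd]
      rcases Nat.lt_succ_iff_lt_or_eq.mp hi with hlt | heq
      · -- i < j : this edge was flat before; the update doesn't touch its endpoints
        have hdne : dst (g i) ≠ dst (g ⟨j, hj⟩) := by
          intro hc
          have h := congrArg Fin.val (hdstinj i ⟨j, hj⟩ hc)
          simp at h
          omega
        have hsne : src (g i) ≠ dst (g ⟨j, hj⟩) := by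
          intro hc
          have : Relation.TransGen (fun a b : Fin n => ∃ e ∈ T, src e = a ∧ dst e = b)
              (dst (g ⟨j, hj⟩)) (dst (g i)) :=
            Relation.TransGen.single ⟨g i, hgmem i, hc, rfl⟩
          have := horder ⟨j, hj⟩ i this
          simp [Fin.lt_def] at this
          omega
        rw [Function.update_of_ne hdne, Function.update_of_ne hsne]
        exact ih (le_of_lt hj) i hlt
      · -- i = j : this is the edge just processed
        have hieq : i = ⟨j, hj⟩ := Fin.ext heq
        rw [hieq]
        have hsne : src (g ⟨j, hj⟩) ≠ dst (g ⟨j, hj⟩) := hloop _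
        rw [Function.update_self, Function.update_of_ne hsne]
  -- final potential is constant (tree spans all vertices)
  have hconst : ∀ v : Fin n, φ (n - 1) v = φ (n - 1) r := by
    intro v
    induction hreach v with
    | refl => rfl
    | tail _ hstep' ih =>
      obtain ⟨e, heT, hsrc, hdst⟩ := hstep'
      obtain ⟨i, hi⟩ := hgsurj e heT
      have := hflat (n - 1) le_rfl i i.isLt
      rw [← hdst, ← hi, this, hi, hsrc]
      exact ih
  funext e
  have := hgrad (n - 1) le_rfl e
  rw [this, hconst (src e), hconst (dst e)]
  simp
end
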